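/- Let n ≥ 3. In the Artin group A(Ã_{n-1}), the cycle relation fails: a_n·a_{n-1}⋯a_1 · a_n·a_{n-1}⋯a_3 ≠ a_{n-1}·a_{n-2}⋯a_1 · a_n·a_{n-1}⋯a_2. -/

import Mathlib

/-!
Send `a_{j+1}` to the permutation of `ℤ` exchanging `x` and `x + 1` for every
`x ≡ j (mod n)`. These affine transpositions satisfy the braid and commutation relations, so
this defines a homomorphism from `A(Ã_{n-1})` to `Equiv.Perm ℤ`. A descending product
`a_{j+l} ⋯ a_{j+1}` moves an integer `x ≡ j` to `x + l`, and fixes `x` when `x` avoids the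
residues `j, …, j + l`.
Evaluating at `1`, the left-hand side gives `-1` and the right-hand side `2n - 1`.
-/

namespace Stmt5

/-- The braid relator `x y x (y x y)⁻¹` (weight 3). -/
def braidRel {γ : Type} (x y : FreeGroup γ) : FreeGroup γ := x * y * x * (y * x * y)⁻¹

/-- The commutation relator `x y (y x)⁻¹` (weight 2). -/
def commRel {γ : Type} (x y : FreeGroup γ) : FreeGroup γ := x * y * (y * x)⁻¹

/-- Relations of the Artin group `A(Ã_{n-1})`: the generator indexed by `i : Fin n`
is `a_{i+1}`; cyclically adjacent generators braid, all other pairs commute. -/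
def AtildeRels (n : ℕ) : Set (FreeGroup (Fin n)) :=
  { r | ∃ i j : Fin n,
      ((j : ℕ) = ((i : ℕ) + 1) % n ∧ r = braidRel (.of i) (.of j)) ∨
      (i ≠ j ∧ (j : ℕ) ≠ ((i : ℕ) + 1) % n ∧ (i : ℕ) ≠ ((j : ℕ) + 1) % n ∧
        r = commRel (.of i) (.of j)) }

/-- The Artin group `A(Ã_{n-1})`. -/
abbrev Atilde (n : ℕ) : Type := PresentedGroup (AtildeRels n)

/-- The standard generator `a_i` (for `1 ≤ i ≤ n`) of `A(Ã_{n-1})`. -/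
def a (n : ℕ) (i : ℕ) : Atilde n :=
  if h : 0 < n then PresentedGroup.of ⟨(i - 1) % n, Nat.mod_lt _ h⟩ else 1

/-- The descending product `a_m · a_{m-1} ⋯ a_k` in `A(Ã_{n-1})`. -/
def dprod (n : ℕ) (k m : ℕ) : Atilde n :=
  ((List.range' k (m + 1 - k)).reverse.map (a n)).prod

section AffineSwap

variable {R : Type*} [CommRing R] [DecidableEq R]

def affSwapFun (c : R) (x : ℤ) : ℤ :=
  if (x : R) = c then x + 1 else if (x : R) = c + 1 then x - 1 else x

variable [Nontrivial R]

theorem affSwapFun_involutive (c : R) : Function.Involutive (affSwapFun c) := by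
  intro x
  by_cases hc : (x : R) = c
  · simp [affSwapFun, hc]
  by_cases hc₁ : (x : R) = c + 1
  · simp [affSwapFun, hc₁]
  · simp [affSwapFun, hc, hc₁]

def affSwap (c : R) : Equiv.Perm ℤ := (affSwapFun_involutive c).toPerm

theorem affSwap_apply_of_eq {c : R} {x : ℤ} (h : (x : R) = c) : affSwap c x = x + 1 := by
  simp [affSwap, affSwapFun, h]

theorem affSwap_apply_of_eq_add_one {c : R} {x : ℤ} (h : (x : R) = c + 1) :
    affSwap c x = x - 1 := by
  simp [affSwap, affSwapFun, h]

theorem affSwap_apply_of_ne {c : R} {x : ℤ} (h : (x : R) ≠ c) (h₁ : (x : R) ≠ c + 1) :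
    affSwap c x = x := by
  simp [affSwap, affSwapFun, h, h₁]

theorem affSwap_braid (h2 : (2 : R) ≠ 0) (c : R) :
    affSwap c * affSwap (c + 1) * affSwap c = affSwap (c + 1) * affSwap c * affSwap (c + 1) := by
  have h21 : (2 : R) ≠ 1 := fun h => one_ne_zero (by linear_combination h)
  ext x
  simp only [Equiv.Perm.mul_apply, affSwap, Function.Involutive.coe_toPerm]
  by_cases hc : (x : R) = c
  · simp [affSwapFun, hc, add_assoc, one_add_one_eq_two, h2, h21]
  by_cases hc₁ : (x : R) = c + 1
  · simp [affSwapFun, hc₁, add_assoc, one_add_one_eq_two, h2, h21]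
  by_cases hc₂ : (x : R) = c + 2
  · norm_num [affSwapFun, hc₂, add_assoc, add_sub_assoc, h2, h21]
  · simp [affSwapFun, hc, hc₁, hc₂, add_assoc, one_add_one_eq_two]

theorem affSwap_commute {c d : R} (hcd : c ≠ d) (hdc : d ≠ c + 1) (hcd₁ : c ≠ d + 1) :
    Commute (affSwap c) (affSwap d) := by
  ext x
  simp only [Equiv.Perm.mul_apply, affSwap, Function.Involutive.coe_toPerm]
  by_cases hc : (x : R) = c
  · simp [affSwapFun, hc, hcd, hdc.symm, hcd₁]
  by_cases hc₁ : (x : R) = c + 1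
  · simp [affSwapFun, hc₁, hcd, hdc.symm, hcd₁]
  by_cases hd : (x : R) = d
  · simp [affSwapFun, hd, hcd.symm, hdc, hcd₁.symm]
  by_cases hd₁ : (x : R) = d + 1
  · simp [affSwapFun, hd₁, hcd.symm, hdc, hcd₁.symm]
  · simp [affSwapFun, hc, hc₁, hd, hd₁]

def swapChain (c : R) : ℕ → Equiv.Perm ℤ
  | 0 => 1
  | l + 1 => affSwap (c + l) * swapChain c l

theorem swapChain_succ' (c : R) (l : ℕ) :
    swapChain c (l + 1) = swapChain (c + 1) l * affSwap c := by
  induction l with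
  | zero => simp [swapChain]
  | succ l ih =>
    rw [swapChain, ih, swapChain, mul_assoc]
    push_cast
    ring_nf

theorem swapChain_apply_of_eq {c : R} {x : ℤ} (h : (x : R) = c) (l : ℕ) :
    swapChain c l x = x + l := by
  induction l with
  | zero => simp [swapChain]
  | succ l ih =>
    rw [swapChain, Equiv.Perm.mul_apply, ih, affSwap_apply_of_eq (by push_cast; rw [h])]
    push_cast
    ring

theorem swapChain_apply_of_forall_ne {c : R} {l : ℕ} {x : ℤ}
    (h : ∀ i ≤ l, (x : R) ≠ c + i) : swapChain c l x = x := by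
  induction l with
  | zero => simp [swapChain]
  | succ l ih =>
    rw [swapChain, Equiv.Perm.mul_apply, ih (fun i hi => h i (by omega))]
    exact affSwap_apply_of_ne (h l (by omega))
      (by simpa [add_assoc] using h (l + 1) le_rfl)

end AffineSwap

theorem natCast_val_eq_natCast_iff {n : ℕ} (i : Fin n) (m : ℕ) :
    ((i : ℕ) : ZMod n) = m ↔ (i : ℕ) = m % n := by
  rw [ZMod.natCast_eq_natCast_iff', Nat.mod_eq_of_lt i.isLt]

theorem natCast_ne_zero_of_pos_of_lt {n k : ℕ} (h0 : 0 < k) (hk : k < n) :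
    (k : ZMod n) ≠ 0 := by
  rw [Ne, ZMod.natCast_eq_zero_iff]
  exact Nat.not_dvd_of_pos_of_lt h0 hk

section Lift

variable {n : ℕ} {G : Type*} [Group G] (g : ZMod n → G)
  (hbraid : ∀ c, g c * g (c + 1) * g c = g (c + 1) * g c * g (c + 1))
  (hcomm : ∀ c d, c ≠ d → d ≠ c + 1 → c ≠ d + 1 → Commute (g c) (g d))

def Atilde.lift : Atilde n →* G :=
  PresentedGroup.toGroup (f := fun i : Fin n => g (i : ℕ)) <| by
    rintro r ⟨i, j, ⟨hj, rfl⟩ | ⟨hij, hj, hi, rfl⟩⟩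
    · have hj' : ((j : ℕ) : ZMod n) = (i : ℕ) + 1 := by
        exact_mod_cast (natCast_val_eq_natCast_iff j _).2 hj
      simp [braidRel, hj', hbraid]
    · have h_ne {p q : Fin n} (h : (q : ℕ) ≠ ((p : ℕ) + 1) % n) :
          ((q : ℕ) : ZMod n) ≠ (p : ℕ) + 1 := by
        exact_mod_cast (natCast_val_eq_natCast_iff q _).not.2 h
      have hij' : ((i : ℕ) : ZMod n) ≠ (j : ℕ) := by
        rw [Ne, natCast_val_eq_natCast_iff, Nat.mod_eq_of_lt j.isLt]
        exact Fin.val_ne_of_ne hij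
      simp [commRel, (hcomm _ _ hij' (h_ne hj) (h_ne hi)).eq]

theorem Atilde.lift_a [NeZero n] (j : ℕ) : Atilde.lift g hbraid hcomm (a n (j + 1)) = g j := by
  simp [Atilde.lift, a, Nat.pos_of_neZero n]

end Lift

theorem dprod_succ_add_succ (n j l : ℕ) :
    dprod n (j + 1) (j + (l + 1)) = a n (j + l + 1) * dprod n (j + 1) (j + l) := by
  simp only [dprod, show j + (l + 1) + 1 - (j + 1) = l + 1 by omega,
    show j + l + 1 - (j + 1) = l by omega, List.range'_concat]
  simp [Nat.add_right_comm]

section AffineRepresentation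

variable {n : ℕ} [Nontrivial (ZMod n)] (h2 : (2 : ZMod n) ≠ 0)

def toAffinePerm : Atilde n →* Equiv.Perm ℤ :=
  Atilde.lift affSwap (affSwap_braid h2) (fun _ _ => affSwap_commute)

theorem toAffinePerm_dprod [NeZero n] (j l : ℕ) :
    toAffinePerm h2 (dprod n (j + 1) (j + l)) = swapChain (j : ZMod n) l := by
  induction l with
  | zero => simp [dprod, swapChain]
  | succ l ih =>
    rw [dprod_succ_add_succ, map_mul, ih, swapChain, toAffinePerm, Atilde.lift_a]
    push_cast
    rfl

end AffineRepresentation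

section CycleRelation

variable {m : ℕ} [Nontrivial (ZMod (m + 3))] (h2 : (2 : ZMod (m + 3)) ≠ 0)

theorem toAffinePerm_dprod_one_mul_dprod_three_apply_one :
    toAffinePerm h2 (dprod (m + 3) 1 (m + 3) * dprod (m + 3) 3 (m + 3)) 1 = -1 := by
  have hdprod₃ := toAffinePerm_dprod h2 2 (m + 1)
  have hdprod₁ := toAffinePerm_dprod h2 0 (m + 3)
  simp only [Nat.cast_ofNat, Nat.cast_zero, zero_add, Nat.reduceAdd,
    show 2 + (m + 1) = m + 3 by omega] at hdprod₃ hdprod₁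
  have hfix₃ : swapChain (2 : ZMod (m + 3)) (m + 1) 1 = 1 := by
    refine swapChain_apply_of_forall_ne fun i hi h => ?_
    refine natCast_ne_zero_of_pos_of_lt (n := m + 3) (k := i + 1) (by omega) (by omega) ?_
    push_cast at h ⊢
    linear_combination -h
  have hfix₁ : swapChain (1 : ZMod (m + 3)) (m + 1) 0 = 0 := by
    refine swapChain_apply_of_forall_ne fun i hi h => ?_
    refine natCast_ne_zero_of_pos_of_lt (n := m + 3) (k := 1 + i) (by omega) (by omega) ?_
    push_cast at h ⊢
    exact h.symm
  have hwrap : ((0 : ℤ) : ZMod (m + 3)) = (m + 2 : ℕ) + 1 := by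
    rw [← Nat.cast_succ, ZMod.natCast_self, Int.cast_zero]
  have hfirst : affSwap (0 : ZMod (m + 3)) 1 = 0 := by
    rw [affSwap_apply_of_eq_add_one (by simp), sub_self]
  rw [map_mul, Equiv.Perm.mul_apply, hdprod₃, hdprod₁, hfix₃, swapChain, Equiv.Perm.mul_apply,
    swapChain_succ', Equiv.Perm.mul_apply, hfirst, zero_add, zero_add, hfix₁,
    affSwap_apply_of_eq_add_one hwrap, zero_sub]

theorem toAffinePerm_dprod_one_mul_dprod_two_apply_one :
    toAffinePerm h2 (dprod (m + 3) 1 (m + 2) * dprod (m + 3) 2 (m + 3)) 1 = 2 * m + 5 := by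
  have hdprod₂ := toAffinePerm_dprod h2 1 (m + 2)
  have hdprod₁ := toAffinePerm_dprod h2 0 (m + 2)
  simp only [Nat.cast_one, Nat.cast_zero, zero_add, Nat.reduceAdd,
    show 1 + (m + 2) = m + 3 by omega] at hdprod₂ hdprod₁
  have hwrap : ((1 + (m + 2 : ℕ) : ℤ) : ZMod (m + 3)) = 0 := by
    rw [← Nat.cast_one, ← Nat.cast_add, Int.cast_natCast, show 1 + (m + 2) = m + 3 by omega,
      ZMod.natCast_self]
  rw [map_mul, Equiv.Perm.mul_apply, hdprod₂, hdprod₁,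
    swapChain_apply_of_eq (c := (1 : ZMod (m + 3))) (x := 1) (by simp), swapChain_apply_of_eq hwrap]
  push_cast
  ring

end CycleRelation

/-- For `n ≥ 3` the cycle relation fails in `A(Ã_{n-1})`:
`a_n ⋯ a_1 · a_n ⋯ a_3 ≠ a_{n-1} ⋯ a_1 · a_n ⋯ a_2`. -/
theorem cycle_relation_fails (n : ℕ) (hn : 3 ≤ n) :
    dprod n 1 n * dprod n 3 n ≠ dprod n 1 (n - 1) * dprod n 2 n := by
  obtain ⟨m, rfl⟩ := Nat.exists_eq_add_of_le' hn
  have : Fact (1 < m + 3) := ⟨by omega⟩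
  have h2 : (2 : ZMod (m + 3)) ≠ 0 := by
    exact_mod_cast natCast_ne_zero_of_pos_of_lt (n := m + 3) two_pos (by omega)
  intro h
  rw [show m + 3 - 1 = m + 2 from rfl] at h
  have key := congrArg (fun g => toAffinePerm h2 g 1) h
  simp only [toAffinePerm_dprod_one_mul_dprod_three_apply_one,
    toAffinePerm_dprod_one_mul_dprod_two_apply_one] at key
  omega

end Stmt5
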